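/- arXiv:2507.11419 — 3 statements merged into one kernel-verified Lean document; each statement's English description precedes it below -/
import Mathlib

section
/- Let s, b, p, q ∈ [0,1] with q ≤ p. If U is uniformly distributed on [0,p] (with p > 0) and V is uniformly distributed on [q,1] (with q < 1), then (b−s)·𝟙{s ≤ p}·𝟙{q ≤ b} = E[p·𝟙{s ≤ U ∧ q ≤ b}] + E[(1−q)·𝟙{s ≤ p ∧ V ≤ b}] + (q−p)·𝟙{s ≤ p ∧ q ≤ b}. -/
open MeasureTheory

lemma if_eq_ind (s : ℝ) :
    (fun u : ℝ => if s ≤ u then (1:ℝ) else 0) = (Set.Ici s).indicator (fun _ => 1) := by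
  funext u; simp [Set.indicator_apply, Set.mem_Ici]

lemma if_eq_ind' (b : ℝ) :
    (fun v : ℝ => if v ≤ b then (1:ℝ) else 0) = (Set.Iic b).indicator (fun _ => 1) := by
  funext u; simp [Set.indicator_apply, Set.mem_Iic]

lemma aux_ici (s a c : ℝ) (ha : a ≤ s) (h : s ≤ c) :
    ∫ u in Set.Icc a c, (if s ≤ u then (1:ℝ) else 0) = c - s := by
  rw [if_eq_ind, MeasureTheory.setIntegral_indicator measurableSet_Ici]
  have hset : Set.Icc a c ∩ Set.Ici s = Set.Icc s c := by
    ext x; simp only [Set.mem_inter_iff, Set.mem_Icc, Set.mem_Ici]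
    constructor
    · rintro ⟨⟨_, h2⟩, h3⟩; exact ⟨h3, h2⟩
    · rintro ⟨h1, h2⟩; exact ⟨⟨le_trans ha h1, h2⟩, h1⟩
  rw [hset, integral_const, measureReal_restrict_apply_univ, measureReal_def, Real.volume_Icc,
    ENNReal.toReal_ofReal (by linarith)]
  simp

lemma aux_ici0 (s a c : ℝ) (h : c < s) :
    ∫ u in Set.Icc a c, (if s ≤ u then (1:ℝ) else 0) = 0 := by
  rw [if_eq_ind, MeasureTheory.setIntegral_indicator measurableSet_Ici]
  have hset : Set.Icc a c ∩ Set.Ici s = ∅ := by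
    ext x; simp only [Set.mem_inter_iff, Set.mem_Icc, Set.mem_Ici, Set.mem_empty_iff_false,
      iff_false]
    rintro ⟨⟨_, h2⟩, h3⟩; linarith
  rw [hset]; simp

lemma aux_iic (b a c : ℝ) (ha : a ≤ b) (h : b ≤ c) :
    ∫ v in Set.Icc a c, (if v ≤ b then (1:ℝ) else 0) = b - a := by
  rw [if_eq_ind', MeasureTheory.setIntegral_indicator measurableSet_Iic]
  have hset : Set.Icc a c ∩ Set.Iic b = Set.Icc a b := by
    ext x; simp only [Set.mem_inter_iff, Set.mem_Icc, Set.mem_Iic]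
    constructor
    · rintro ⟨⟨h1, _⟩, h3⟩; exact ⟨h1, h3⟩
    · rintro ⟨h1, h2⟩; exact ⟨⟨h1, le_trans h2 h⟩, h2⟩
  rw [hset, integral_const, measureReal_restrict_apply_univ, measureReal_def, Real.volume_Icc,
    ENNReal.toReal_ofReal (by linarith)]
  simp

lemma aux_iic0 (b a c : ℝ) (h : b < a) :
    ∫ v in Set.Icc a c, (if v ≤ b then (1:ℝ) else 0) = 0 := by
  rw [if_eq_ind', MeasureTheory.setIntegral_indicator measurableSet_Iic]
  have hset : Set.Icc a c ∩ Set.Iic b = ∅ := by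
    ext x; simp only [Set.mem_inter_iff, Set.mem_Icc, Set.mem_Iic, Set.mem_empty_iff_false,
      iff_false]
    rintro ⟨⟨h1, _⟩, h3⟩; linarith
  rw [hset]; simp

theorem stmt_2 (s b p q : ℝ)
    (hs : s ∈ Set.Icc (0:ℝ) 1) (hb : b ∈ Set.Icc (0:ℝ) 1)
    (hp : p ∈ Set.Icc (0:ℝ) 1) (hq : q ∈ Set.Icc (0:ℝ) 1)
    (hqp : q ≤ p) (hp0 : 0 < p) (hq1 : q < 1)
    (μU μV : Measure ℝ)
    (hU : μU = ENNReal.ofReal (1 / p) • volume.restrict (Set.Icc 0 p))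
    (hV : μV = ENNReal.ofReal (1 / (1 - q)) • volume.restrict (Set.Icc q 1)) :
    (b - s) * (if s ≤ p then (1:ℝ) else 0) * (if q ≤ b then (1:ℝ) else 0) =
      (∫ u, p * (if s ≤ u ∧ q ≤ b then (1:ℝ) else 0) ∂μU)
      + (∫ v, (1 - q) * (if s ≤ p ∧ v ≤ b then (1:ℝ) else 0) ∂μV)
      + (q - p) * (if s ≤ p ∧ q ≤ b then (1:ℝ) else 0) := by
  obtain ⟨hs0, hs1⟩ := hs
  obtain ⟨hb0, hb1⟩ := hb
  subst hU hV
  rw [integral_smul_measure, integral_smul_measure]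
  rw [ENNReal.toReal_ofReal (by positivity), ENNReal.toReal_ofReal (le_of_lt (one_div_pos.mpr (by linarith)))]
  by_cases hsp : s ≤ p
  · by_cases hqb : q ≤ b
    · have h1 : ∀ u : ℝ, p * (if s ≤ u ∧ q ≤ b then (1:ℝ) else 0)
          = p * (if s ≤ u then (1:ℝ) else 0) := by
        intro u; by_cases h : s ≤ u <;> simp [h, hqb]
      have h2 : ∀ v : ℝ, (1 - q) * (if s ≤ p ∧ v ≤ b then (1:ℝ) else 0)
          = (1 - q) * (if v ≤ b then (1:ℝ) else 0) := by
        intro v; by_cases h : v ≤ b <;> simp [h, hsp]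
      simp only [h1, h2, MeasureTheory.integral_const_mul]
      rw [aux_ici s 0 p hs0 hsp, aux_iic b q 1 hqb hb1]
      have hpne : p ≠ 0 := ne_of_gt hp0
      have hqne : (1 : ℝ) - q ≠ 0 := by linarith
      simp only [hsp, hqb, if_true, and_self, smul_eq_mul]
      field_simp
      ring
    · have h1 : ∀ u : ℝ, p * (if s ≤ u ∧ q ≤ b then (1:ℝ) else 0) = 0 := by
        intro u; simp [hqb]
      have h2 : ∀ v : ℝ, (1 - q) * (if s ≤ p ∧ v ≤ b then (1:ℝ) else 0)
          = (1 - q) * (if v ≤ b then (1:ℝ) else 0) := by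
        intro v; by_cases h : v ≤ b <;> simp [h, hsp]
      simp only [h1, h2, MeasureTheory.integral_const_mul, integral_zero]
      rw [aux_iic0 b q 1 (not_le.mp hqb)]
      simp [hsp, hqb]
  · have h1 : ∀ u : ℝ, p * (if s ≤ u ∧ q ≤ b then (1:ℝ) else 0)
        = p * ((if q ≤ b then (1:ℝ) else 0) * (if s ≤ u then (1:ℝ) else 0)) := by
      intro u; by_cases h : s ≤ u <;> by_cases h' : q ≤ b <;> simp [h, h']
    have h2 : ∀ v : ℝ, (1 - q) * (if s ≤ p ∧ v ≤ b then (1:ℝ) else 0) = 0 := by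
      intro v; simp [hsp]
    simp only [h1, h2, MeasureTheory.integral_const_mul, integral_zero]
    rw [aux_ici0 s 0 p (not_le.mp hsp)]
    simp [hsp]
end

section
/- Let P be a probability distribution on [0,1]² with coordinates (s,b), and let GFT(p,q) = E[(b−s)·𝟙{s ≤ p ∧ q ≤ b}]. For any p* ∈ [0,1] and any pair (p,q) with q ≤ p* ≤ p, it holds that GFT(p*, p*) − GFT(p,q) ≤ (p − q) · P(q ≤ b ≤ s ≤ p). -/
open MeasureTheory

theorem stmt_9 (P : Measure (ℝ × ℝ)) [IsProbabilityMeasure P]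
    (hsupp : P (Set.Icc (0:ℝ) 1 ×ˢ Set.Icc (0:ℝ) 1) = 1)
    (pstar p q : ℝ) (hpstar : pstar ∈ Set.Icc (0:ℝ) 1)
    (hp : p ∈ Set.Icc (0:ℝ) 1) (hq : q ∈ Set.Icc (0:ℝ) 1)
    (hqp : q ≤ pstar) (hpp : pstar ≤ p) :
    (∫ x, (x.2 - x.1) * (if x.1 ≤ pstar ∧ pstar ≤ x.2 then (1:ℝ) else 0) ∂P)
      - (∫ x, (x.2 - x.1) * (if x.1 ≤ p ∧ q ≤ x.2 then (1:ℝ) else 0) ∂P)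
      ≤ (p - q) * (P {x : ℝ × ℝ | q ≤ x.2 ∧ x.2 ≤ x.1 ∧ x.1 ≤ p}).toReal := by
  set C : Set (ℝ × ℝ) := {x : ℝ × ℝ | q ≤ x.2 ∧ x.2 ≤ x.1 ∧ x.1 ≤ p} with hCdef
  have hC : MeasurableSet C := by
    apply MeasurableSet.inter (measurableSet_le measurable_const measurable_snd)
    exact MeasurableSet.inter (measurableSet_le measurable_snd measurable_fst)
      (measurableSet_le measurable_fst measurable_const)
  have hae : ∀ᵐ x ∂P, x ∈ Set.Icc (0:ℝ) 1 ×ˢ Set.Icc (0:ℝ) 1 := by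
    rw [ae_iff]
    have : {x : ℝ × ℝ | ¬ x ∈ Set.Icc (0:ℝ) 1 ×ˢ Set.Icc (0:ℝ) 1}
        = (Set.Icc (0:ℝ) 1 ×ˢ Set.Icc (0:ℝ) 1)ᶜ := rfl
    rw [this, measure_compl (by measurability) (measure_ne_top _ _), hsupp, measure_univ]
    simp
  have hint : ∀ a b : ℝ, Integrable (fun x : ℝ × ℝ =>
      (x.2 - x.1) * (if x.1 ≤ a ∧ b ≤ x.2 then (1:ℝ) else 0)) P := by
    intro a b
    apply Integrable.mono' (integrable_const (1:ℝ))
    · apply Measurable.aestronglyMeasurable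
      exact (measurable_snd.sub measurable_fst).mul
        (Measurable.ite ((measurableSet_le measurable_fst measurable_const).inter
          (measurableSet_le measurable_const measurable_snd)) measurable_const measurable_const)
    · filter_upwards [hae] with x hx
      obtain ⟨⟨h1, h2⟩, ⟨h3, h4⟩⟩ := hx
      split_ifs with h
      · rw [mul_one, Real.norm_eq_abs, abs_le]; constructor <;> linarith
      · simp
  rw [← integral_sub (hint pstar pstar) (hint p q)]
  have key : (∫ x, ((x.2 - x.1) * (if x.1 ≤ pstar ∧ pstar ≤ x.2 then (1:ℝ) else 0)
        - (x.2 - x.1) * (if x.1 ≤ p ∧ q ≤ x.2 then (1:ℝ) else 0)) ∂P)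
      ≤ ∫ x, (p - q) * C.indicator (fun _ => (1:ℝ)) x ∂P := by
    apply integral_mono ((hint pstar pstar).sub (hint p q))
    · exact (Integrable.indicator (integrable_const 1) hC).const_mul _
    · intro x
      simp only [Pi.sub_apply]
      have hind : (0:ℝ) ≤ (p - q) * C.indicator (fun _ => (1:ℝ)) x :=
        mul_nonneg (by linarith) (Set.indicator_nonneg (fun _ _ => zero_le_one) x)
      by_cases hB : x.1 ≤ p ∧ q ≤ x.2
      · rw [if_pos hB]
        by_cases hA : x.1 ≤ pstar ∧ pstar ≤ x.2
        · rw [if_pos hA]; linarith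
        · rw [if_neg hA, mul_zero, zero_sub, mul_one]
          rcases le_or_gt x.2 x.1 with hsb | hsb
          · have hmem : x ∈ C := ⟨hB.2, hsb, hB.1⟩
            rw [Set.indicator_of_mem hmem]
            have : p - q ≤ (p - q) * 1 := by ring_nf; exact le_refl _
            linarith
          · linarith
      · rw [if_neg hB]
        have hA : ¬ (x.1 ≤ pstar ∧ pstar ≤ x.2) := by
          intro h; exact hB ⟨h.1.trans hpp, hqp.trans h.2⟩
        rw [if_neg hA]; linarith
  refine key.trans ?_
  rw [integral_const_mul]
  have : ∫ a, C.indicator (fun _ => (1:ℝ)) a ∂P = (P C).toReal := by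
    rw [integral_indicator_const (1:ℝ) hC]; simp [Measure.real]
  rw [this]
end

section
/- Under the unperturbed lower-bound instance μ₀ with parameters ℓ, Δ = ℓ/N, γ₁, γ₅, γ₆ as specified, the expected gain from trade of the grid point M_{i,j} = ((1−ℓ)/2 + iΔ, (1−ℓ)/2 + jΔ) equals c + γ₁·(1−2ℓ)·(i−j) for all i, j ∈ {0,…,N}, where c = γ₆ + ℓ·γ₅ + γ₁·(N+2)·(1−2ℓ). -/
set_option maxHeartbeats 1600000


/-- Gain from trade at valuation `(s, b)` for prices `(p, q)`. -/
noncomputable def gftAt (p q s b : ℝ) : ℝ :=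
  (b - s) * (if s ≤ p ∧ q ≤ b then (1:ℝ) else 0)

/-- Expected gain from trade of prices `(p, q)` under the unperturbed lower-bound
instance `μ₀`, written as an explicit finite sum over its support. -/
noncomputable def expGFT₀ (N : ℕ) (ℓ Δ γ₁ γ₅ γ₆ p q : ℝ) : ℝ :=
  (∑ i' ∈ Finset.range (N + 1),
      (γ₁ * (1 + 2 * (i' : ℝ) / (3 * N)) * gftAt p q ((1 - ℓ) / 2 + i' * Δ) 1
        + γ₁ * (1 - 2 * (i' : ℝ) / (3 * N)) * gftAt p q ((1 - ℓ) / 2 + i' * Δ) (1 - 3 * ℓ)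
        + γ₁ * (1 + 2 * ((N : ℝ) - i') / (3 * N)) * gftAt p q 0 ((1 - ℓ) / 2 + i' * Δ)
        + γ₁ * (1 - 2 * ((N : ℝ) - i') / (3 * N)) * gftAt p q (3 * ℓ) ((1 - ℓ) / 2 + i' * Δ)))
    + γ₅ * gftAt p q ((1 - ℓ) / 2) ((1 + ℓ) / 2)
    + γ₆ * (gftAt p q 0 0 + gftAt p q 0 1 + gftAt p q 1 0 + gftAt p q 1 1)

theorem stmt_14 (N : ℕ) (hN : 2 ≤ N) (ℓ Δ g γ₁ γ₅ γ₆ : ℝ)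
    (hℓ : ℓ = 1 / 8) (hΔ : Δ = ℓ / N) (hg0 : 0 < g) (hg : g ≤ 1 / 16)
    (hγ₁ : γ₁ = g / (4 * (N + 1))) (hγ₅ : γ₅ = 1 / 2)
    (hγ₆ : γ₆ = (1 / 4) * (1 - 4 * (N + 1) * γ₁ - γ₅))
    (i j : ℕ) (hi : i ≤ N) (hj : j ≤ N) :
    expGFT₀ N ℓ Δ γ₁ γ₅ γ₆ ((1 - ℓ) / 2 + i * Δ) ((1 - ℓ) / 2 + j * Δ) =
      (γ₆ + ℓ * γ₅ + γ₁ * (N + 2) * (1 - 2 * ℓ))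
        + γ₁ * (1 - 2 * ℓ) * ((i : ℝ) - (j : ℝ)) := by
  subst hℓ hΔ
  have hN0 : (0:ℝ) < N := by exact_mod_cast (by omega : 0 < N)
  have hNne : (N:ℝ) ≠ 0 := hN0.ne'
  have hiR : (i:ℝ) ≤ N := by exact_mod_cast hi
  have hjR : (j:ℝ) ≤ N := by exact_mod_cast hj
  have hΔ0 : (0:ℝ) < 1/8/(N:ℝ) := by positivity
  have hbound : ∀ a : ℕ, (a:ℝ) ≤ N → (a:ℝ) * (1/8/(N:ℝ)) ≤ 1/8 := by
    intro a ha
    have h1 : (a:ℝ)/N ≤ 1 := (div_le_one hN0).mpr ha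
    have h2 : (a:ℝ) * (1/8/(N:ℝ)) = ((a:ℝ)/N) * (1/8) := by ring
    rw [h2]; nlinarith
  have hiΔ0 : (0:ℝ) ≤ (i:ℝ) * (1/8/(N:ℝ)) := by positivity
  have hjΔ0 : (0:ℝ) ≤ (j:ℝ) * (1/8/(N:ℝ)) := by positivity
  have hiΔ1 := hbound i hiR
  have hjΔ1 := hbound j hjR
  have hmono : ∀ a b : ℕ,
      ((1 - 1/8)/2 + (a:ℝ) * (1/8/(N:ℝ)) ≤ (1 - 1/8)/2 + (b:ℝ) * (1/8/(N:ℝ))) ↔ a ≤ b := by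
    intro a b
    rw [add_le_add_iff_left, mul_le_mul_iff_of_pos_right hΔ0, Nat.cast_le]
  have key : ∀ i' ∈ Finset.range (N + 1),
      (γ₁ * (1 + 2 * (i' : ℝ) / (3 * N)) *
          gftAt ((1 - 1/8) / 2 + i * (1/8/(N:ℝ))) ((1 - 1/8) / 2 + j * (1/8/(N:ℝ)))
            ((1 - 1/8) / 2 + i' * (1/8/(N:ℝ))) 1
        + γ₁ * (1 - 2 * (i' : ℝ) / (3 * N)) *
          gftAt ((1 - 1/8) / 2 + i * (1/8/(N:ℝ))) ((1 - 1/8) / 2 + j * (1/8/(N:ℝ)))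
            ((1 - 1/8) / 2 + i' * (1/8/(N:ℝ))) (1 - 3 * (1/8))
        + γ₁ * (1 + 2 * ((N : ℝ) - i') / (3 * N)) *
          gftAt ((1 - 1/8) / 2 + i * (1/8/(N:ℝ))) ((1 - 1/8) / 2 + j * (1/8/(N:ℝ)))
            0 ((1 - 1/8) / 2 + i' * (1/8/(N:ℝ)))
        + γ₁ * (1 - 2 * ((N : ℝ) - i') / (3 * N)) *
          gftAt ((1 - 1/8) / 2 + i * (1/8/(N:ℝ))) ((1 - 1/8) / 2 + j * (1/8/(N:ℝ)))
            (3 * (1/8)) ((1 - 1/8) / 2 + i' * (1/8/(N:ℝ))))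
      = (if i' ≤ i then γ₁ * (1 - 2 * (1/8)) else 0)
        + (if j ≤ i' then γ₁ * (1 - 2 * (1/8)) else 0) := by
    intro i' hi'
    rw [Finset.mem_range, Nat.lt_succ_iff] at hi'
    have hi'R : (i':ℝ) ≤ N := by exact_mod_cast hi'
    have hi'Δ0 : (0:ℝ) ≤ (i':ℝ) * (1/8/(N:ℝ)) := by positivity
    have hi'Δ1 := hbound i' hi'R
    simp only [gftAt]
    by_cases h1 : i' ≤ i <;> by_cases h2 : j ≤ i'
    · rw [if_pos ⟨(hmono i' i).mpr h1, by linarith⟩,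
        if_pos ⟨(hmono i' i).mpr h1, by linarith⟩,
        if_pos ⟨by linarith, (hmono j i').mpr h2⟩,
        if_pos ⟨by linarith, (hmono j i').mpr h2⟩,
        if_pos h1, if_pos h2]
      field_simp
      ring
    · rw [if_pos ⟨(hmono i' i).mpr h1, by linarith⟩,
        if_pos ⟨(hmono i' i).mpr h1, by linarith⟩,
        if_neg (fun h => h2 ((hmono j i').mp h.2)),
        if_neg (fun h => h2 ((hmono j i').mp h.2)),
        if_pos h1, if_neg h2]
      field_simp
      ring
    · rw [if_neg (fun h => h1 ((hmono i' i).mp h.1)),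
        if_neg (fun h => h1 ((hmono i' i).mp h.1)),
        if_pos ⟨by linarith, (hmono j i').mpr h2⟩,
        if_pos ⟨by linarith, (hmono j i').mpr h2⟩,
        if_neg h1, if_pos h2]
      field_simp
      ring
    · rw [if_neg (fun h => h1 ((hmono i' i).mp h.1)),
        if_neg (fun h => h1 ((hmono i' i).mp h.1)),
        if_neg (fun h => h2 ((hmono j i').mp h.2)),
        if_neg (fun h => h2 ((hmono j i').mp h.2)),
        if_neg h1, if_neg h2]
      ring
  rw [expGFT₀, Finset.sum_congr rfl key, Finset.sum_add_distrib]
  have s1 : (∑ i' ∈ Finset.range (N + 1), if i' ≤ i then γ₁ * (1 - 2 * (1/8:ℝ)) else 0)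
      = ((i:ℝ) + 1) * (γ₁ * (1 - 2 * (1/8))) := by
    rw [← Finset.sum_filter]
    have hf : Finset.filter (fun i' => i' ≤ i) (Finset.range (N + 1)) = Finset.range (i + 1) := by
      ext a; simp [Nat.lt_succ_iff]; omega
    rw [hf, Finset.sum_const, Finset.card_range, nsmul_eq_mul]
    push_cast; ring
  have s2 : (∑ i' ∈ Finset.range (N + 1), if j ≤ i' then γ₁ * (1 - 2 * (1/8:ℝ)) else 0)
      = ((N:ℝ) + 1 - j) * (γ₁ * (1 - 2 * (1/8))) := by
    rw [← Finset.sum_filter]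
    have hf : Finset.filter (fun i' => j ≤ i') (Finset.range (N + 1)) = Finset.Ico j (N + 1) := by
      ext a; simp [Nat.lt_succ_iff]; omega
    rw [hf, Finset.sum_const, Nat.card_Ico, nsmul_eq_mul, Nat.cast_sub (by omega)]
    push_cast; ring
  rw [s1, s2]
  have e5 : gftAt ((1 - 1/8) / 2 + i * (1/8/(N:ℝ))) ((1 - 1/8) / 2 + j * (1/8/(N:ℝ)))
      ((1 - 1/8) / 2) ((1 + 1/8) / 2) = 1/8 := by
    rw [gftAt, if_pos ⟨by linarith, by linarith⟩]; norm_num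
  have e00 : gftAt ((1 - 1/8) / 2 + i * (1/8/(N:ℝ))) ((1 - 1/8) / 2 + j * (1/8/(N:ℝ))) 0 0 = 0 := by
    rw [gftAt]; ring
  have e01 : gftAt ((1 - 1/8) / 2 + i * (1/8/(N:ℝ))) ((1 - 1/8) / 2 + j * (1/8/(N:ℝ))) 0 1 = 1 := by
    rw [gftAt, if_pos ⟨by linarith, by linarith⟩]; norm_num
  have e10 : gftAt ((1 - 1/8) / 2 + i * (1/8/(N:ℝ))) ((1 - 1/8) / 2 + j * (1/8/(N:ℝ))) 1 0 = 0 := by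
    rw [gftAt, if_neg (fun h => by linarith [h.2])]; ring
  have e11 : gftAt ((1 - 1/8) / 2 + i * (1/8/(N:ℝ))) ((1 - 1/8) / 2 + j * (1/8/(N:ℝ))) 1 1 = 0 := by
    rw [gftAt]; ring
  rw [e5, e00, e01, e10, e11]
  ring
end
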